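/- arXiv:1811.11993 — 5 statements merged into one kernel-verified Lean document; each statement's English description precedes it below -/
import Mathlib

section
/- Let a, b, c, q ∈ ℝ with q ≠ 0, and suppose c ≠ 0 or a + b ≠ 0. Then the equality of sl(2,ℝ)-elements 2c(b−a)E₁ + 2c(b−a)E₂ + 2(a²−b²)E₃ = q·(−(c/√2)(E₁+E₂) + ((a+b)/√2)E₃) holds if and only if a − b = q/(2√2). (Equivalently: the one-parameter subgroup exp(t(aE₁+bE₂+cE₃)) is a contact magnetic curve with strength q in SL(2,ℝ), i.e. U(X,X) = qφX, if and only if a − b = q/(2√2).) -/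
open Matrix

/-- The orthonormal basis E₁ = √2·E, E₂ = √2·F, E₃ = H of sl(2,ℝ). -/
noncomputable def E₁ : Matrix (Fin 2) (Fin 2) ℝ := Real.sqrt 2 • !![0, 1; 0, 0]

noncomputable def E₂ : Matrix (Fin 2) (Fin 2) ℝ := Real.sqrt 2 • !![0, 0; 1, 0]

def E₃ : Matrix (Fin 2) (Fin 2) ℝ := !![1, 0; 0, -1]

/-! Comparing coordinates in the basis E₁, E₂, E₃, the equation U(X,X) = qφX becomes the system
c·k = 0, (a + b)·k = 0 with k = a − b − q/(2√2), and the nondegeneracy of X forces k = 0. -/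

theorem smul_E₁_add_smul_E₂_add_smul_E₃_inj {x y z x' y' z' : ℝ} :
    x • E₁ + y • E₂ + z • E₃ = x' • E₁ + y' • E₂ + z' • E₃ ↔ x = x' ∧ y = y' ∧ z = z' := by
  have hs : Real.sqrt 2 ≠ 0 := by positivity
  constructor
  · intro h
    have h01 := congrFun (congrFun h 0) 1
    have h10 := congrFun (congrFun h 1) 0
    have h00 := congrFun (congrFun h 0) 0
    simp [E₁, E₂, E₃, hs] at h01 h10 h00
    exact ⟨h01, h10, h00⟩
  · rintro ⟨rfl, rfl, rfl⟩
    rfl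

theorem mul_eq_zero_and_mul_eq_zero_iff {R : Type*} [MulZeroClass R] [NoZeroDivisors R]
    {x y k : R} (h : x ≠ 0 ∨ y ≠ 0) : x * k = 0 ∧ y * k = 0 ↔ k = 0 := by
  refine ⟨fun ⟨hx, hy⟩ => ?_, fun hk => by simp [hk]⟩
  rcases h with h | h
  · exact (mul_eq_zero.mp hx).resolve_left h
  · exact (mul_eq_zero.mp hy).resolve_left h

theorem oneParameter_magnetic_iff_general (a b c q : ℝ)
    (h : c ≠ 0 ∨ a + b ≠ 0) :
    (2 * c * (b - a)) • E₁ + (2 * c * (b - a)) • E₂ + (2 * (a ^ 2 - b ^ 2)) • E₃ =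
        q • ((-(c / Real.sqrt 2)) • (E₁ + E₂) + ((a + b) / Real.sqrt 2) • E₃) ↔
      a - b = q / (2 * Real.sqrt 2) := by
  set k := a - b - q / (2 * Real.sqrt 2) with hk
  have lorentz : q • ((-(c / Real.sqrt 2)) • (E₁ + E₂) + ((a + b) / Real.sqrt 2) • E₃) =
      (-(q * c / Real.sqrt 2)) • E₁ + (-(q * c / Real.sqrt 2)) • E₂ +
        (q * (a + b) / Real.sqrt 2) • E₃ := by
    module
  have off_diagonal : 2 * c * (b - a) = -(q * c / Real.sqrt 2) ↔ c * k = 0 :=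
    ⟨fun e => by linear_combination (-1 / 2 : ℝ) * e,
      fun e => by linear_combination (-2 : ℝ) * e⟩
  have diagonal : 2 * (a ^ 2 - b ^ 2) = q * (a + b) / Real.sqrt 2 ↔ (a + b) * k = 0 :=
    ⟨fun e => by linear_combination (1 / 2 : ℝ) * e,
      fun e => by linear_combination (2 : ℝ) * e⟩
  rw [lorentz, smul_E₁_add_smul_E₂_add_smul_E₃_inj, and_self_left, off_diagonal, diagonal,
    mul_eq_zero_and_mul_eq_zero_iff h, hk, sub_eq_zero]

/-- The one-parameter subgroup exp(t(aE₁+bE₂+cE₃)) is a contact magnetic curve with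
strength q ≠ 0 in SL(2,ℝ), i.e. U(X,X) = qφX, if and only if a − b = q/(2√2). -/
theorem oneParameter_magnetic_iff (a b c q : ℝ) (hq : q ≠ 0)
    (h : c ≠ 0 ∨ a + b ≠ 0) :
    (2 * c * (b - a)) • E₁ + (2 * c * (b - a)) • E₂ + (2 * (a ^ 2 - b ^ 2)) • E₃ =
        q • ((-(c / Real.sqrt 2)) • (E₁ + E₂) + ((a + b) / Real.sqrt 2) • E₃) ↔
      a - b = q / (2 * Real.sqrt 2) :=
  oneParameter_magnetic_iff_general a b c q h
end

section
/- Let q, r, x₀ ∈ ℝ with |q| > 2 and r > 0, and let μ : ℝ → ℝ be differentiable with μ'(s) = |q| − 2cos μ(s) for all s. Define x(s) = r·sin μ(s) + x₀ and y(s) = r·(|q|/2 − cos μ(s)). Then y(s) > 0 for all s, the curve (x, y) is unit-speed in H²(−4), i.e. x'(s)² + y'(s)² = 4y(s)², and it has constant signed curvature |q|, i.e. (x'y'' − x''y')/(4y²) + x'/y = |q|. Moreover x' = 2y·cos μ and y' = 2y·sin μ. -/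
/-!
The curve is unit-speed because `(x', y') = 2y (cos μ, sin μ)`, i.e. `μ` is the angle of its
tangent measured against the orthonormal frame `(2y ∂ₓ, 2y ∂ᵧ)` of `H²(−4)`. For any curve with
tangent angle `θ` in this sense, `x'y'' − x''y' = 4y² θ'`, so its signed curvature is
`θ' + 2 cos θ`; the equation `μ' = |q| − 2 cos μ` makes this the constant `|q|`.
-/

open Real

noncomputable def signedCurvature (x y : ℝ → ℝ) (s : ℝ) : ℝ :=
  (deriv x s * deriv (deriv y) s - deriv (deriv x) s * deriv y s) / (4 * (y s) ^ 2)
    + deriv x s / y s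

section TangentAngle

variable {x y θ θ' : ℝ → ℝ}

theorem sq_deriv_add_sq_deriv_of_tangentAngle
    (hx : ∀ s, HasDerivAt x (2 * y s * cos (θ s)) s)
    (hy : ∀ s, HasDerivAt y (2 * y s * sin (θ s)) s) (s : ℝ) :
    deriv x s ^ 2 + deriv y s ^ 2 = 4 * y s ^ 2 := by
  rw [(hx s).deriv, (hy s).deriv]
  linear_combination 4 * y s ^ 2 * sin_sq_add_cos_sq (θ s)

theorem wronskian_deriv_of_tangentAngle
    (hx : ∀ s, HasDerivAt x (2 * y s * cos (θ s)) s)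
    (hy : ∀ s, HasDerivAt y (2 * y s * sin (θ s)) s)
    (hθ : ∀ s, HasDerivAt θ (θ' s) s) (s : ℝ) :
    deriv x s * deriv (deriv y) s - deriv (deriv x) s * deriv y s = 4 * y s ^ 2 * θ' s := by
  have hdx : deriv x = fun s => 2 * y s * cos (θ s) := funext fun s => (hx s).deriv
  have hdy : deriv y = fun s => 2 * y s * sin (θ s) := funext fun s => (hy s).deriv
  rw [hdx, hdy, (((hy s).const_mul 2).fun_mul (hθ s).cos).deriv,
    (((hy s).const_mul 2).fun_mul (hθ s).sin).deriv]
  linear_combination 4 * y s ^ 2 * θ' s * sin_sq_add_cos_sq (θ s)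

theorem signedCurvature_of_tangentAngle
    (hx : ∀ s, HasDerivAt x (2 * y s * cos (θ s)) s)
    (hy : ∀ s, HasDerivAt y (2 * y s * sin (θ s)) s)
    (hθ : ∀ s, HasDerivAt θ (θ' s) s) {s : ℝ} (hys : y s ≠ 0) :
    signedCurvature x y s = θ' s + 2 * cos (θ s) := by
  rw [signedCurvature, wronskian_deriv_of_tangentAngle hx hy hθ, (hx s).deriv]
  field_simp

end TangentAngle

section MagneticCircle

variable {μ : ℝ → ℝ} {c : ℝ} (r x₀ : ℝ)

theorem hasDerivAt_magneticCircle_fst (hμ : ∀ s, HasDerivAt μ (c - 2 * cos (μ s)) s) (s : ℝ) :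
    HasDerivAt (fun s => r * sin (μ s) + x₀)
      (2 * (r * (c / 2 - cos (μ s))) * cos (μ s)) s :=
  (((hμ s).sin.const_mul r).add_const x₀).congr_deriv (by ring)

theorem hasDerivAt_magneticCircle_snd (hμ : ∀ s, HasDerivAt μ (c - 2 * cos (μ s)) s) (s : ℝ) :
    HasDerivAt (fun s => r * (c / 2 - cos (μ s)))
      (2 * (r * (c / 2 - cos (μ s))) * sin (μ s)) s :=
  (((hμ s).cos.const_sub (c / 2)).const_mul r).congr_deriv (by ring)

end MagneticCircle

/-- The projection to H²(−4) of a Legendre contact magnetic curve of strength q, |q| > 2: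
the curve x = r·sin μ + x₀, y = r·(|q|/2 − cos μ) with μ' = |q| − 2cos μ lies in the upper
half-plane, is unit-speed there, and has constant signed curvature |q|. -/
theorem legendre_projection_circle (q r x₀ : ℝ) (hq : 2 < |q|) (hr : 0 < r)
    (μ : ℝ → ℝ) (hμ : ∀ s, HasDerivAt μ (|q| - 2 * Real.cos (μ s)) s)
    (x y : ℝ → ℝ)
    (hx : ∀ s, x s = r * Real.sin (μ s) + x₀)
    (hy : ∀ s, y s = r * (|q| / 2 - Real.cos (μ s))) :
    (∀ s, 0 < y s) ∧
    (∀ s, deriv x s = 2 * y s * Real.cos (μ s)) ∧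
    (∀ s, deriv y s = 2 * y s * Real.sin (μ s)) ∧
    (∀ s, (deriv x s) ^ 2 + (deriv y s) ^ 2 = 4 * (y s) ^ 2) ∧
    (∀ s,
      (deriv x s * deriv (deriv y) s - deriv (deriv x) s * deriv y s) / (4 * (y s) ^ 2)
        + deriv x s / y s = |q|) := by
  obtain rfl : x = _ := funext hx
  obtain rfl : y = _ := funext hy
  have hy_pos : ∀ s, 0 < r * (|q| / 2 - cos (μ s)) := fun s =>
    mul_pos hr (by linarith [cos_le_one (μ s)])
  have hx' := hasDerivAt_magneticCircle_fst r x₀ hμ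
  have hy' := hasDerivAt_magneticCircle_snd r hμ
  refine ⟨hy_pos, fun s => (hx' s).deriv, fun s => (hy' s).deriv,
    sq_deriv_add_sq_deriv_of_tangentAngle hx' hy', fun s => ?_⟩
  rw [← signedCurvature, signedCurvature_of_tangentAngle hx' hy' hμ (hy_pos s).ne']
  ring
end

section
/- Let σ ∈ (0, π) and let q̄ ∈ ℝ with q̄ > 2·sin σ. Set ω = √(q̄² − 4sin²σ) and define, for s ∈ (−π/ω, π/ω), U(s) = 2·arctan(√((q̄ − 2sin σ)/(q̄ + 2sin σ))·tan(ωs/2)). Then U(0) = 0 and U'(s) + 2·sin σ·cos U(s) − q̄ = 0 for all s ∈ (−π/ω, π/ω). -/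
/-!
With `t = tan (ω s / 2)`, the function `U s = 2 arctan (a t)` has `U' = a ω (1 + t²) / (1 + a² t²)`
and `cos U = (1 - a² t²) / (1 + a² t²)`, so `U' = α - β cos U` exactly when `α - β = a ω` and
`(α + β) a = ω`. For `α = q̄`, `β = 2 sin σ` both identities hold for the given `a` and `ω`,
because `q̄² - 4 sin² σ = (q̄ - 2 sin σ)(q̄ + 2 sin σ)`. On `|s| < π / ω` the tangent has no pole.
-/

open Real Set

noncomputable def angleSolution (a ω s : ℝ) : ℝ :=
  2 * arctan (a * tan (ω * s / 2))

theorem Real.cos_two_mul_arctan (x : ℝ) : cos (2 * arctan x) = (1 - x ^ 2) / (1 + x ^ 2) := by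
  have : 0 < 1 + x ^ 2 := by positivity
  rw [cos_two_mul, cos_sq_arctan]
  field_simp
  ring

theorem hasDerivAt_angleSolution (a ω s : ℝ) (hs : cos (ω * s / 2) ≠ 0) :
    HasDerivAt (angleSolution a ω)
      (a * ω * (1 + tan (ω * s / 2) ^ 2) / (1 + (a * tan (ω * s / 2)) ^ 2)) s := by
  have hinner : HasDerivAt (fun x : ℝ => ω * x / 2) (ω / 2) s := by
    simpa using ((hasDerivAt_id s).const_mul ω).div_const 2
  refine ((((hasDerivAt_tan hs).comp s hinner).const_mul a).arctan.const_mul 2).congr_deriv ?_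
  rw [Function.comp_apply, ← inv_one_add_tan_sq hs]
  field_simp

theorem hasDerivAt_angleSolution_eq_sub_mul_cos {a ω α β s : ℝ} (hs : cos (ω * s / 2) ≠ 0)
    (hsub : α - β = a * ω) (hadd : (α + β) * a = ω) :
    HasDerivAt (angleSolution a ω) (α - β * cos (angleSolution a ω s)) s := by
  convert hasDerivAt_angleSolution a ω s hs using 1
  set t := tan (ω * s / 2)
  have hden : 0 < 1 + (a * t) ^ 2 := by positivity
  rw [angleSolution, cos_two_mul_arctan, eq_div_iff hden.ne', sub_mul, mul_assoc,
    div_mul_cancel₀ _ hden.ne']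
  linear_combination hsub + a * t ^ 2 * hadd

theorem cos_mul_div_two_pos {ω s : ℝ} (hω : 0 < ω) (hs : s ∈ Ioo (-(π / ω)) (π / ω)) :
    0 < cos (ω * s / 2) := by
  have hlt : ω * s < π := by rw [← lt_div_iff₀' hω]; exact hs.2
  have hgt : -π < ω * s := by rw [← div_lt_iff₀' hω, neg_div]; exact hs.1
  exact cos_pos_of_mem_Ioo ⟨by linarith, by linarith⟩

theorem Real.sqrt_div_mul_sqrt_mul {p r : ℝ} (hp : 0 ≤ p) (hr : 0 < r) :
    √(p / r) * √(p * r) = p := by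
  rw [← sqrt_mul (div_nonneg hp hr.le), show p / r * (p * r) = p ^ 2 by field_simp, sqrt_sq hp]

theorem Real.mul_sqrt_div {p r : ℝ} (hr : 0 ≤ r) : r * √(p / r) = √(p * r) := by
  rcases hr.eq_or_lt with rfl | hr
  · simp
  rw [← sqrt_sq hr.le, ← sqrt_mul (sq_nonneg r), sqrt_sq hr.le]
  congr 1
  field_simp

/-- Explicit solution of the angle ODE U' + 2 sin σ · cos U − q̄ = 0 with U(0) = 0 in the
case q̄ > 2 sin σ: U(s) = 2 arctan(√((q̄−2sinσ)/(q̄+2sinσ))·tan(ωs/2)), ω = √(q̄²−4sin²σ),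
on the interval (−π/ω, π/ω). -/
theorem angle_ode_solution (σ qb ω : ℝ) (hσ : σ ∈ Set.Ioo 0 Real.pi)
    (hq : 2 * Real.sin σ < qb)
    (hω : ω = Real.sqrt (qb ^ 2 - 4 * Real.sin σ ^ 2))
    (U : ℝ → ℝ)
    (hU : ∀ s, U s = 2 * Real.arctan
      (Real.sqrt ((qb - 2 * Real.sin σ) / (qb + 2 * Real.sin σ)) * Real.tan (ω * s / 2))) :
    U 0 = 0 ∧
    ∀ s ∈ Set.Ioo (-(Real.pi / ω)) (Real.pi / ω),
      HasDerivAt U (qb - 2 * Real.sin σ * Real.cos (U s)) s := by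
  have hsin : 0 < sin σ := sin_pos_of_pos_of_lt_pi hσ.1 hσ.2
  have hp : 0 < qb - 2 * sin σ := by linarith
  have hr : 0 < qb + 2 * sin σ := by linarith
  have hω' : ω = √((qb - 2 * sin σ) * (qb + 2 * sin σ)) := by rw [hω]; congr 1; ring
  have hUa : U = angleSolution √((qb - 2 * sin σ) / (qb + 2 * sin σ)) ω := funext hU
  refine ⟨by simp [hU], fun s hs => ?_⟩
  have hωpos : 0 < ω := by rw [hω']; positivity
  rw [hUa]
  refine hasDerivAt_angleSolution_eq_sub_mul_cos (cos_mul_div_two_pos hωpos hs).ne' ?_ ?_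
  · rw [hω', sqrt_div_mul_sqrt_mul hp.le hr]
  · rw [hω', mul_sqrt_div hr.le]
end

section
/- Let σ ∈ (0, π), q̄ > 2·sin σ, r̄ > 0 and x₀ ∈ ℝ, and let U : ℝ → ℝ be differentiable with U'(s) = q̄ − 2·sin σ·cos U(s) for all s. Define x(s) = 2r̄·sin σ·sin U(s) + x₀ and y(s) = r̄·(q̄ − 2·sin σ·cos U(s)). Then y(s) > 0, x'(s) = 2y(s)·sin σ·cos U(s) and y'(s) = 2y(s)·sin σ·sin U(s) for all s; in particular x'² + y'² = 4y²·sin²σ, and the unit-speed reparametrization β̄(s̄) = (x(s̄/sin σ), y(s̄/sin σ)) has constant signed curvature q̄/sin σ in H²(−4), i.e. it satisfies (x'y'' − x''y')/(4y²) + x'/y = q̄/sin σ with respect to the arclength parameter s̄. -/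
/-! The normalized velocity of `(x, y)` makes the angle `U` with the horizontal, so after the
rescaling `s̄ = s sin σ` to unit speed the angle `V(s̄) = U(s̄ / sin σ)` satisfies
`V' = (q̄ − 2 sin σ cos V) / sin σ`. For a unit-speed curve in `H²(−4)` whose velocity makes the
angle `V` the curvature is `V' + 2 cos V`, since `x'y'' − x''y' = 4y²V'`; here that is
`q̄ / sin σ`. -/

open Real

/-- The signed geodesic curvature of `t ↦ (x t, y t)` in `H²(−4)`, provided the curve has unit
speed. -/
noncomputable def unitSpeedCurvature (x y : ℝ → ℝ) (t : ℝ) : ℝ :=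
  (deriv x t * deriv (deriv y) t - deriv (deriv x) t * deriv y t) / (4 * y t ^ 2)
    + deriv x t / y t

theorem unitSpeedCurvature_eq_of_angle {x y V V' : ℝ → ℝ}
    (hx : ∀ t, HasDerivAt x (2 * y t * cos (V t)) t)
    (hy : ∀ t, HasDerivAt y (2 * y t * sin (V t)) t)
    (hV : ∀ t, HasDerivAt V (V' t) t) (t : ℝ) (hyt : y t ≠ 0) :
    unitSpeedCurvature x y t = V' t + 2 * cos (V t) := by
  have hdx : deriv x = fun t => 2 * y t * cos (V t) := funext fun t => (hx t).deriv
  have hdy : deriv y = fun t => 2 * y t * sin (V t) := funext fun t => (hy t).deriv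
  have hddx : HasDerivAt (fun t => 2 * y t * cos (V t))
      (2 * (2 * y t * sin (V t)) * cos (V t) + 2 * y t * (-sin (V t) * V' t)) t :=
    ((hy t).const_mul 2).mul ((hasDerivAt_cos _).comp t (hV t))
  have hddy : HasDerivAt (fun t => 2 * y t * sin (V t))
      (2 * (2 * y t * sin (V t)) * sin (V t) + 2 * y t * (cos (V t) * V' t)) t :=
    ((hy t).const_mul 2).mul ((hasDerivAt_sin _).comp t (hV t))
  rw [unitSpeedCurvature, hdx, hdy, hddx.deriv, hddy.deriv]
  field_simp
  linear_combination 4 * V' t * sin_sq_add_cos_sq (V t)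

theorem HasDerivAt.comp_div_const {f : ℝ → ℝ} {f' t c : ℝ} (hf : HasDerivAt f (c * f') (t / c))
    (hc : c ≠ 0) : HasDerivAt (fun t => f (t / c)) f' t :=
  (hf.comp t ((hasDerivAt_id t).div_const c)).congr_deriv (by field_simp)

section MagneticProjection

variable {c qb rb x₀ : ℝ} {U : ℝ → ℝ}

theorem magneticY_pos (hc : 0 ≤ c) (hq : 2 * c < qb) (hr : 0 < rb) (u : ℝ) :
    0 < rb * (qb - 2 * c * cos u) :=
  mul_pos hr (by nlinarith [cos_le_one u])

variable (hU : ∀ s, HasDerivAt U (qb - 2 * c * cos (U s)) s)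
include hU

theorem hasDerivAt_magneticX (s : ℝ) :
    HasDerivAt (fun s => 2 * rb * c * sin (U s) + x₀)
      (2 * (rb * (qb - 2 * c * cos (U s))) * c * cos (U s)) s :=
  ((((hasDerivAt_sin _).comp s (hU s)).const_mul (2 * rb * c)).add_const x₀).congr_deriv
    (by ring)

theorem hasDerivAt_magneticY (s : ℝ) :
    HasDerivAt (fun s => rb * (qb - 2 * c * cos (U s)))
      (2 * (rb * (qb - 2 * c * cos (U s))) * c * sin (U s)) s :=
  (((((hasDerivAt_cos _).comp s (hU s)).const_mul (2 * c)).const_sub qb).const_mul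
    rb).congr_deriv (by ring)

end MagneticProjection

/-- The projection to H²(−4) of a contact magnetic curve of contact angle σ in SL(2,ℝ):
with U' = q̄ − 2 sin σ cos U, the curve x = 2r̄ sinσ sin U + x₀, y = r̄(q̄ − 2 sinσ cos U)
lies in the upper half-plane, has speed sin σ, and its unit-speed reparametrization has
constant signed curvature q̄/sin σ. -/
theorem magnetic_projection_circle (σ qb rb x₀ : ℝ) (hσ : σ ∈ Set.Ioo 0 Real.pi)
    (hq : 2 * Real.sin σ < qb) (hr : 0 < rb)
    (U : ℝ → ℝ) (hU : ∀ s, HasDerivAt U (qb - 2 * Real.sin σ * Real.cos (U s)) s)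
    (x y xb yb : ℝ → ℝ)
    (hx : ∀ s, x s = 2 * rb * Real.sin σ * Real.sin (U s) + x₀)
    (hy : ∀ s, y s = rb * (qb - 2 * Real.sin σ * Real.cos (U s)))
    (hxb : ∀ s, xb s = x (s / Real.sin σ))
    (hyb : ∀ s, yb s = y (s / Real.sin σ)) :
    (∀ s, 0 < y s) ∧
    (∀ s, deriv x s = 2 * y s * Real.sin σ * Real.cos (U s)) ∧
    (∀ s, deriv y s = 2 * y s * Real.sin σ * Real.sin (U s)) ∧
    (∀ s, (deriv x s) ^ 2 + (deriv y s) ^ 2 = 4 * (y s) ^ 2 * Real.sin σ ^ 2) ∧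
    (∀ s,
      (deriv xb s * deriv (deriv yb) s - deriv (deriv xb) s * deriv yb s) / (4 * (yb s) ^ 2)
        + deriv xb s / yb s = qb / Real.sin σ) := by
  have hc : 0 < sin σ := sin_pos_of_pos_of_lt_pi hσ.1 hσ.2
  have hy_pos (s : ℝ) : 0 < y s := hy s ▸ magneticY_pos hc.le hq hr _
  have hx' (s : ℝ) : HasDerivAt x (2 * y s * sin σ * cos (U s)) s := by
    rw [funext hx, funext hy]
    exact hasDerivAt_magneticX hU s
  have hy' (s : ℝ) : HasDerivAt y (2 * y s * sin σ * sin (U s)) s := by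
    rw [funext hy]
    exact hasDerivAt_magneticY hU s
  refine ⟨hy_pos, fun s => (hx' s).deriv, fun s => (hy' s).deriv, fun s => ?_, fun s => ?_⟩
  · rw [(hx' s).deriv, (hy' s).deriv]
    linear_combination 4 * y s ^ 2 * sin σ ^ 2 * sin_sq_add_cos_sq (U s)
  · rw [funext hxb, funext hyb]
    refine (unitSpeedCurvature_eq_of_angle
      (V' := fun t => (qb - 2 * sin σ * cos (U (t / sin σ))) / sin σ)
      (fun t => ((hx' _).congr_deriv (by ring)).comp_div_const hc.ne')
      (fun t => ((hy' _).congr_deriv (by ring)).comp_div_const hc.ne')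
      (fun t => ((hU _).congr_deriv (by field_simp)).comp_div_const hc.ne') s
      (hy_pos _).ne').trans ?_
    field_simp
    ring
end

section
/- Let a, b, c ∈ ℝ with b ≠ 0 and c² + 2ab = 0, and set X = [[c, √2·a],[√2·b, −c]] (so X ∈ sl(2,ℝ) with det X = 0). For t ∈ ℝ let p(t) = exp(tX) = I + tX, and define the Iwasawa projection coordinates x(t) = (p₁₁(t)p₂₁(t) + p₁₂(t)p₂₂(t))/(p₂₁(t)² + p₂₂(t)²) and y(t) = 1/(p₂₁(t)² + p₂₂(t)²). Then p₂₁(t)² + p₂₂(t)² > 0, b ≠ a, and for all t: (x(t) − c/(√2·b))² + (y(t) − (b−a)/(2b))² = ((b−a)/(2b))². In particular the projection of the one-parameter subgroup exp(tX) lies on a Euclidean circle tangent to the boundary line y = 0, i.e. a horocycle of H²(−4). -/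
/-!
Since `X` is traceless with `det X = 0`, `X² = 0`, so `exp (tX) = 1 + tX` has determinant one.
The row vector `v = (1, -x₀)`, `x₀ = c / (√2 b)`, is a left null vector of `X`, hence
`v exp (tX) = v` for all `t`. By Lagrange's identity
`(p₀₀p₁₀ + p₀₁p₁₁)² + (det p)² = (p₀₀² + p₀₁²)(p₁₀² + p₁₁²)`, for `det p = 1` the point `π p`
lies on the circle of radius `r` tangent to `y = 0` at `x₀` as soon as `‖v p‖² = 2r`; here
`‖v‖² = 1 + x₀² = (b - a) / b`.
-/

open Matrix

theorem NormedSpace.exp_eq_one_add_of_sq_eq_zero {𝔸 : Type*} [Ring 𝔸] [Algebra ℚ 𝔸]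
    [TopologicalSpace 𝔸] [IsTopologicalRing 𝔸] {x : 𝔸} (hx : x ^ 2 = 0) :
    NormedSpace.exp x = 1 + x := by
  rw [congrFun NormedSpace.exp_eq_tsum_rat x, tsum_eq_sum (s := Finset.range 2)]
  · simp [Finset.sum_range_succ]
  · intro n hn
    rw [pow_eq_zero_of_le (not_lt.mp (Finset.mem_range.not.mp hn)) hx, smul_zero]

namespace Matrix

section CommRing

variable {R : Type*} [CommRing R]

theorem sq_eq_zero_of_trace_eq_zero_of_det_eq_zero [Nontrivial R]
    {A : Matrix (Fin 2) (Fin 2) R} (htr : A.trace = 0) (hdet : A.det = 0) : A ^ 2 = 0 := by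
  simpa [charpoly_fin_two, htr, hdet] using A.aeval_self_charpoly

theorem det_one_add_of_trace_eq_zero_of_det_eq_zero
    {A : Matrix (Fin 2) (Fin 2) R} (htr : A.trace = 0) (hdet : A.det = 0) : (1 + A).det = 1 := by
  rw [trace_fin_two] at htr
  rw [det_fin_two] at hdet ⊢
  simp only [add_apply, one_apply_eq, one_apply_ne zero_ne_one, one_apply_ne one_ne_zero]
  linear_combination htr + hdet

theorem vecMul_one_add_of_vecMul_eq_zero {n : Type*} [Fintype n] [DecidableEq n]
    {v : n → R} {A : Matrix n n R} (hv : v ᵥ* A = 0) : v ᵥ* (1 + A) = v := by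
  rw [vecMul_add, vecMul_one, hv, add_zero]

end CommRing

theorem sq_add_sq_pos_of_det_ne_zero {p : Matrix (Fin 2) (Fin 2) ℝ} (hp : p.det ≠ 0) :
    0 < p 1 0 ^ 2 + p 1 1 ^ 2 := by
  by_contra! h
  obtain ⟨h₀, h₁⟩ : p 1 0 = 0 ∧ p 1 1 = 0 := by
    constructor <;> nlinarith [sq_nonneg (p 1 0), sq_nonneg (p 1 1)]
  exact hp (by simp [det_fin_two, h₀, h₁])

end Matrix

theorem hopf_projection_mem_horocycle {p : Matrix (Fin 2) (Fin 2) ℝ} (hdet : p.det = 1)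
    {x₀ r : ℝ} (h : (![1, -x₀] ᵥ* p) ⬝ᵥ (![1, -x₀] ᵥ* p) = 2 * r) :
    ((p 0 0 * p 1 0 + p 0 1 * p 1 1) / (p 1 0 ^ 2 + p 1 1 ^ 2) - x₀) ^ 2
      + (1 / (p 1 0 ^ 2 + p 1 1 ^ 2) - r) ^ 2 = r ^ 2 := by
  have hD := (sq_add_sq_pos_of_det_ne_zero (hdet ▸ one_ne_zero)).ne'
  simp only [vecMul, dotProduct, Fin.sum_univ_two, cons_val_zero, cons_val_one,
    cons_val_fin_one, one_mul, neg_mul] at h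
  rw [det_fin_two] at hdet
  field_simp
  linear_combination (p 1 0 ^ 2 + p 1 1 ^ 2) * h - (p 0 0 * p 1 1 - p 0 1 * p 1 0 + 1) * hdet

/-- The projection of the one-parameter subgroup exp(tX), X = aE₁+bE₂+cE₃ with det X = 0
(i.e. c² + 2ab = 0) and b ≠ 0, under the hyperbolic Hopf fibering lies on the horocycle
(x − c/(√2 b))² + (y − (b−a)/(2b))² = ((b−a)/(2b))² of H²(−4). -/
theorem parabolic_one_parameter_projects_to_horocycle (a b c : ℝ)
    (hb : b ≠ 0) (hc : c ^ 2 + 2 * a * b = 0)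
    (X : Matrix (Fin 2) (Fin 2) ℝ)
    (hX : X = !![c, Real.sqrt 2 * a; Real.sqrt 2 * b, -c])
    (p : ℝ → Matrix (Fin 2) (Fin 2) ℝ)
    (hp : ∀ t, p t = NormedSpace.exp (t • X))
    (x y : ℝ → ℝ)
    (hx : ∀ t, x t = (p t 0 0 * p t 1 0 + p t 0 1 * p t 1 1) /
      ((p t 1 0) ^ 2 + (p t 1 1) ^ 2))
    (hy : ∀ t, y t = 1 / ((p t 1 0) ^ 2 + (p t 1 1) ^ 2)) :
    (∀ t, p t = 1 + t • X) ∧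
    (∀ t, 0 < (p t 1 0) ^ 2 + (p t 1 1) ^ 2) ∧
    b ≠ a ∧
    (∀ t, (x t - c / (Real.sqrt 2 * b)) ^ 2 + (y t - (b - a) / (2 * b)) ^ 2
        = ((b - a) / (2 * b)) ^ 2) := by
  have hs : Real.sqrt 2 ^ 2 = 2 := Real.sq_sqrt zero_le_two
  have hsb : Real.sqrt 2 * b ≠ 0 := by positivity
  have htr (t : ℝ) : (t • X).trace = 0 := by simp [hX, trace_fin_two]
  have hdet (t : ℝ) : (t • X).det = 0 := by
    simp only [hX, det_smul, Fintype.card_fin, det_fin_two_of]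
    linear_combination (-t ^ 2) * hc - t ^ 2 * a * b * hs
  have hp_eq (t : ℝ) : p t = 1 + t • X := by
    rw [hp, NormedSpace.exp_eq_one_add_of_sq_eq_zero
      (sq_eq_zero_of_trace_eq_zero_of_det_eq_zero (htr t) (hdet t))]
  have hp_det (t : ℝ) : (p t).det = 1 := by
    rw [hp_eq, det_one_add_of_trace_eq_zero_of_det_eq_zero (htr t) (hdet t)]
  have hv : ![1, -(c / (Real.sqrt 2 * b))] ᵥ* X = 0 := by
    ext j
    fin_cases j
    · simp [hX, vecMul, dotProduct, Fin.sum_univ_two, hsb]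
    · simp only [hX, vecMul, dotProduct, Fin.sum_univ_two, Fin.mk_one, of_apply, cons_val',
        cons_val_zero, cons_val_one, cons_val_fin_one, one_mul, mul_neg, neg_mul, neg_neg,
        Pi.zero_apply]
      field_simp
      linear_combination hc + a * b * hs
  refine ⟨hp_eq, fun t => sq_add_sq_pos_of_det_ne_zero (by simp [hp_det]), ?_, fun t => ?_⟩
  · rintro rfl
    exact hb (by nlinarith [sq_nonneg c])
  · rw [hx t, hy t]
    refine hopf_projection_mem_horocycle (hp_det t) ?_
    rw [hp_eq t, vecMul_one_add_of_vecMul_eq_zero (by rw [vecMul_smul, hv, smul_zero])]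
    simp only [dotProduct, Fin.sum_univ_two, cons_val_zero, cons_val_one, cons_val_fin_one,
      mul_one, neg_mul_neg]
    field_simp
    linear_combination hc + a * b * hs
end
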